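/- Let d ≥ 1, let t > −d be real, let n = (n₁,…,n_d) be a weight of positive integers, let r ≥ 1, and let M be an n-quasi homogeneous submodule of ℂ[z₁,…,z_d]^r. Then a generating set for M consisting of n-quasi homogeneous elements is a stable generating set with respect to the Drury–Arveson norm ‖·‖_{H²_d} if and only if it is a stable generating set with respect to the norm ‖·‖_t. -/

import Mathlib

open scoped BigOperators
noncomputable section

/-- The weight of the monomial `z^α` in the `𝓗_d^{(t)}` norm:
`‖z^α‖_t² = α! / ∏_{i=1}^{|α|} (d+t+i)`.  The case `t = -d` gives the
Drury–Arveson weight `α!/|α|!`. -/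
def wt (d : ℕ) (t : ℝ) (α : Fin d →₀ ℕ) : ℝ :=
  (∏ i, (Nat.factorial (α i) : ℝ)) /
    ∏ j ∈ Finset.range (∑ i, α i), ((d : ℝ) + t + (j + 1))

/-- The squared norm `‖f‖_t²` of a polynomial (distinct monomials orthogonal). -/
def tNormSq (d : ℕ) (t : ℝ) (f : MvPolynomial (Fin d) ℂ) : ℝ :=
  ∑ α ∈ f.support, ‖MvPolynomial.coeff α f‖ ^ 2 * wt d t α

/-- The norm `‖h‖_t` of a vector-valued polynomial `h ∈ ℂ[z]^r`:
`‖(h₁,…,h_r)‖_t² = ∑_j ‖h_j‖_t²`. -/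
def tNormVec (d r : ℕ) (t : ℝ) (h : Fin r → MvPolynomial (Fin d) ℂ) : ℝ :=
  Real.sqrt (∑ j, tNormSq d t (h j))

/-- `f` is `n`-quasi homogeneous of degree `m`: every monomial `z^α` appearing in `f`
satisfies `n₁α₁ + ⋯ + n_dα_d = m`. -/
def QuasiHomog (d : ℕ) (n : Fin d → ℕ) (m : ℕ) (f : MvPolynomial (Fin d) ℂ) : Prop :=
  ∀ α ∈ f.support, ∑ i, n i * α i = m

/-- A vector-valued polynomial is `n`-quasi homogeneous of degree `m` if every
monomial appearing in any coordinate has weighted degree `m`. -/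
def QuasiHomogVec (d r : ℕ) (n : Fin d → ℕ) (m : ℕ)
    (f : Fin r → MvPolynomial (Fin d) ℂ) : Prop :=
  ∀ j, QuasiHomog d n m (f j)

/-!
On monomials `‖z^α‖²_{H²_d} = ‖z^α‖²_t · R(|α|)` with `R(ℓ) = ∏_{j<ℓ} (d+t+j+1)/(j+1)`
increasing in `ℓ`. A monomial of weighted degree `m` has `m / max nᵢ ≤ |α| ≤ m`, and
`R(m) ≤ exp((d+t) max nᵢ) R(|α|)` on that range, so on each weighted degree the two norms are
proportional up to a constant independent of the degree. Both norms make different weighted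
degrees orthogonal, `M` contains the weighted homogeneous components of its elements, and a
division of the degree-`m` component of `h` can be replaced by its degree-`m` part without
increasing any norm. Dividing each component separately, transferring the estimate degree by
degree and summing (Cauchy–Schwarz over the `k` generators) moves stability from one norm to
the other.
-/

namespace MvPolynomial

open Finset

variable {σ R ι M : Type*} [CommSemiring R] [AddCommMonoid M]

theorem weightedHomogeneousComponent_mul_of_right {w : σ → ℕ} {f : MvPolynomial σ R} {i : ℕ}
    (hf : f.IsWeightedHomogeneous w i) (g : MvPolynomial σ R) (m : ℕ) :
    weightedHomogeneousComponent w m (g * f) =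
      if i ≤ m then weightedHomogeneousComponent w (m - i) g * f else 0 := by
  classical
  let := weightedGradedAlgebra R w
  simpa only [DirectSum.decompose, Equiv.coe_fn_mk, weightedDecomposition.decompose'_apply] using
    DirectSum.coe_decompose_mul_of_right_mem (weightedHomogeneousSubmodule R w) (a := g) m hf

theorem sum_weightedHomogeneousComponent_of_subset {w : σ → M}
    {p : MvPolynomial σ R} {S : Finset M} (hS : ∀ α ∈ p.support, Finsupp.weight w α ∈ S) :
    ∑ m ∈ S, weightedHomogeneousComponent w m p = p := by
  classical
  ext α
  simp only [coeff_sum, coeff_weightedHomogeneousComponent, sum_ite_eq]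
  split_ifs with hα
  · rfl
  · exact (notMem_support_iff.mp fun h => hα (hS α h)).symm

def piWeightedHomogeneousComponent (w : σ → M) (m : M) :
    (ι → MvPolynomial σ R) →ₗ[R] (ι → MvPolynomial σ R) :=
  (weightedHomogeneousComponent w m).compLeft ι

theorem piWeightedHomogeneousComponent_apply (w : σ → M) (m : M)
    (h : ι → MvPolynomial σ R) (j : ι) :
    piWeightedHomogeneousComponent w m h j = weightedHomogeneousComponent w m (h j) := rfl

theorem isWeightedHomogeneous_piWeightedHomogeneousComponent 
    (w : σ → M) (m : M) (h : ι → MvPolynomial σ R) (j : ι) :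
    (piWeightedHomogeneousComponent w m h j).IsWeightedHomogeneous w m :=
  weightedHomogeneousComponent_isWeightedHomogeneous m (h j)

theorem piWeightedHomogeneousComponent_of_isWeightedHomogeneous 
    {w : σ → M} {m : M} {h : ι → MvPolynomial σ R} (hh : ∀ j, (h j).IsWeightedHomogeneous w m) :
    piWeightedHomogeneousComponent w m h = h := by
  ext1 j
  exact (hh j).weightedHomogeneousComponent_same

theorem sum_piWeightedHomogeneousComponent_of_subset {w : σ → M}
    {h : ι → MvPolynomial σ R} {S : Finset M}
    (hS : ∀ j, ∀ α ∈ (h j).support, Finsupp.weight w α ∈ S) :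
    ∑ m ∈ S, piWeightedHomogeneousComponent w m h = h := by
  ext1 j
  simp only [Finset.sum_apply, piWeightedHomogeneousComponent_apply,
    sum_weightedHomogeneousComponent_of_subset (hS j)]

theorem piWeightedHomogeneousComponent_smul {w : σ → ℕ} {f : ι → MvPolynomial σ R} {i : ℕ}
    (hf : ∀ j, (f j).IsWeightedHomogeneous w i) (g : MvPolynomial σ R) (m : ℕ) :
    piWeightedHomogeneousComponent w m (g • f) =
      (if i ≤ m then weightedHomogeneousComponent w (m - i) g else 0) • f := by
  ext1 j
  rw [piWeightedHomogeneousComponent_apply, Pi.smul_apply, smul_eq_mul,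
    weightedHomogeneousComponent_mul_of_right (hf j)]
  split_ifs <;> simp

theorem piWeightedHomogeneousComponent_mem_span {w : σ → ℕ} {G : Set (ι → MvPolynomial σ R)}
    (hG : ∀ g ∈ G, ∃ i, ∀ j, (g j).IsWeightedHomogeneous w i) {x : ι → MvPolynomial σ R}
    (hx : x ∈ Submodule.span (MvPolynomial σ R) G) (m : ℕ) :
    piWeightedHomogeneousComponent w m x ∈ Submodule.span (MvPolynomial σ R) G := by
  obtain ⟨N, c, g, rfl⟩ := Submodule.mem_span_set'.mp hx
  rw [map_sum]
  refine Submodule.sum_mem _ fun k _ => ?_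
  obtain ⟨i, hi⟩ := hG _ (g k).2
  rw [piWeightedHomogeneousComponent_smul hi]
  exact Submodule.smul_mem _ _ (Submodule.subset_span (g k).2)

end MvPolynomial

open MvPolynomial Finset

section QuasiHomogeneity

variable {d r m : ℕ} {n : Fin d → ℕ}

theorem quasiHomog_iff_isWeightedHomogeneous {p : MvPolynomial (Fin d) ℂ} :
    QuasiHomog d n m p ↔ p.IsWeightedHomogeneous n m := by
  simp only [QuasiHomog, IsWeightedHomogeneous, mem_support_iff, Finsupp.weight_eq_sum, smul_eq_mul,
    mul_comm]

theorem quasiHomogVec_iff {f : Fin r → MvPolynomial (Fin d) ℂ} :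
    QuasiHomogVec d r n m f ↔ ∀ j, (f j).IsWeightedHomogeneous n m :=
  forall_congr' fun _ => quasiHomog_iff_isWeightedHomogeneous

theorem sum_le_and_le_sup_mul_of_sum_mul_eq (hn : ∀ i, 0 < n i) {α : Fin d →₀ ℕ}
    (hα : ∑ i, n i * α i = m) : ∑ i, α i ≤ m ∧ m ≤ univ.sup n * ∑ i, α i := by
  subst hα
  rw [mul_sum]
  exact ⟨sum_le_sum fun i _ => Nat.le_mul_of_pos_left _ (hn i),
    sum_le_sum fun i _ => Nat.mul_le_mul_right _ (le_sup (mem_univ i))⟩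

end QuasiHomogeneity

section Weights

variable {d : ℕ} {t : ℝ}

theorem add_succ_pos_of_neg_le (ht : -(d : ℝ) ≤ t) (j : ℕ) : 0 < (d : ℝ) + t + (j + 1) := by
  have : (0 : ℝ) ≤ j := j.cast_nonneg
  linarith

theorem wt_pos (ht : -(d : ℝ) ≤ t) (α : Fin d →₀ ℕ) : 0 < wt d t α :=
  div_pos (prod_pos fun i _ => by positivity) (prod_pos fun j _ => add_succ_pos_of_neg_le ht j)

/-- `normRatio d t |α| = ‖z^α‖²_{H²_d} / ‖z^α‖²_t`. -/
def normRatio (d : ℕ) (t : ℝ) (ℓ : ℕ) : ℝ :=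
  ∏ j ∈ range ℓ, ((d : ℝ) + t + (j + 1)) / (j + 1)

theorem normRatio_pos (ht : -(d : ℝ) ≤ t) (ℓ : ℕ) : 0 < normRatio d t ℓ :=
  prod_pos fun j _ => div_pos (add_succ_pos_of_neg_le ht j) (by positivity)

theorem wt_neg_eq_wt_mul_normRatio (ht : -(d : ℝ) ≤ t) (α : Fin d →₀ ℕ) :
    wt d (-d) α = wt d t α * normRatio d t (∑ i, α i) := by
  have hP : ∏ j ∈ range (∑ i, α i), ((d : ℝ) + t + (j + 1)) ≠ 0 :=
    (prod_pos fun j _ => add_succ_pos_of_neg_le ht j).ne'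
  have hF : ∏ j ∈ range (∑ i, α i), ((j : ℝ) + 1) ≠ 0 := (prod_pos fun j _ => by positivity).ne'
  simp only [wt, normRatio, prod_div_distrib, add_neg_cancel, zero_add]
  field_simp

theorem normRatio_mono (ht : -(d : ℝ) ≤ t) : Monotone (normRatio d t) := by
  refine monotone_nat_of_le_succ fun ℓ => ?_
  rw [normRatio, normRatio, prod_range_succ]
  refine le_mul_of_one_le_right (normRatio_pos ht ℓ).le ?_
  rw [one_le_div (by positivity)]
  linarith

theorem normRatio_le_exp_mul (ht : -(d : ℝ) ≤ t) {N ℓ m : ℕ} (hℓm : ℓ ≤ m) (hmℓ : m ≤ N * ℓ) :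
    normRatio d t m ≤ Real.exp ((d + t) * N) * normRatio d t ℓ := by
  set s : ℝ := d + t
  have hs : 0 ≤ s := by simp only [s]; linarith
  have hfactor : ∀ j ∈ Ico ℓ m, (s + (j + 1)) / (j + 1) ≤ Real.exp (s / (ℓ + 1)) := by
    intro j hj
    have hℓj : (ℓ : ℝ) ≤ j := by exact_mod_cast (mem_Ico.mp hj).1
    calc (s + (j + 1)) / (j + 1) = s / (j + 1) + 1 := by field_simp
      _ ≤ s / (ℓ + 1) + 1 := by gcongr
      _ ≤ Real.exp (s / (ℓ + 1)) := Real.add_one_le_exp _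
  have hlen : ((m - ℓ : ℕ) : ℝ) * (s / (ℓ + 1)) ≤ s * N := by
    have : ((m - ℓ : ℕ) : ℝ) ≤ N * (ℓ + 1) := by
      have : m - ℓ ≤ N * ℓ + N := by omega
      exact_mod_cast this.trans_eq (by ring)
    rw [mul_div_assoc', div_le_iff₀ (by positivity)]
    nlinarith
  have hR := (normRatio_pos ht ℓ).le
  calc normRatio d t m = (∏ j ∈ Ico ℓ m, (s + (j + 1)) / (j + 1)) * normRatio d t ℓ := by
        rw [normRatio, normRatio, ← prod_range_mul_prod_Ico _ hℓm, mul_comm]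
    _ ≤ Real.exp (s / (ℓ + 1)) ^ (m - ℓ) * normRatio d t ℓ := by
        refine mul_le_mul_of_nonneg_right ?_ hR
        calc _ ≤ ∏ _j ∈ Ico ℓ m, Real.exp (s / (ℓ + 1)) :=
              prod_le_prod (fun j _ => div_nonneg (by positivity) (by positivity)) hfactor
          _ = _ := by rw [prod_const, Nat.card_Ico]
    _ = Real.exp ((m - ℓ : ℕ) * (s / (ℓ + 1))) * normRatio d t ℓ := by rw [← Real.exp_nat_mul]
    _ ≤ Real.exp (s * N) * normRatio d t ℓ := by gcongr

end Weights

section Norms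

variable {d r : ℕ} {t : ℝ} {n : Fin d → ℕ}

theorem tNormSq_nonneg (ht : -(d : ℝ) ≤ t) (p : MvPolynomial (Fin d) ℂ) : 0 ≤ tNormSq d t p :=
  sum_nonneg fun α _ => mul_nonneg (by positivity) (wt_pos ht α).le

theorem tNormSq_neg_le_normRatio_mul (ht : -(d : ℝ) ≤ t) (hn : ∀ i, 0 < n i) {m : ℕ}
    {p : MvPolynomial (Fin d) ℂ} (hp : QuasiHomog d n m p) :
    tNormSq d (-d) p ≤ normRatio d t m * tNormSq d t p := by
  rw [tNormSq, tNormSq, mul_sum]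
  refine sum_le_sum fun α hα => ?_
  have hR := normRatio_mono ht (sum_le_and_le_sup_mul_of_sum_mul_eq hn (hp α hα)).1
  have := (wt_pos ht α).le
  rw [wt_neg_eq_wt_mul_normRatio ht]
  calc ‖coeff α p‖ ^ 2 * (wt d t α * normRatio d t (∑ i, α i))
      ≤ ‖coeff α p‖ ^ 2 * (wt d t α * normRatio d t m) := by gcongr
    _ = normRatio d t m * (‖coeff α p‖ ^ 2 * wt d t α) := by ring

theorem normRatio_mul_tNormSq_le (ht : -(d : ℝ) ≤ t) (hn : ∀ i, 0 < n i) {m : ℕ}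
    {p : MvPolynomial (Fin d) ℂ} (hp : QuasiHomog d n m p) :
    normRatio d t m * tNormSq d t p ≤ Real.exp ((d + t) * univ.sup n) * tNormSq d (-d) p := by
  rw [tNormSq, tNormSq, mul_sum, mul_sum]
  refine sum_le_sum fun α hα => ?_
  obtain ⟨hℓm, hmℓ⟩ := sum_le_and_le_sup_mul_of_sum_mul_eq hn (hp α hα)
  have hR := normRatio_le_exp_mul ht hℓm hmℓ
  have := (wt_pos ht α).le
  rw [wt_neg_eq_wt_mul_normRatio ht]
  calc normRatio d t m * (‖coeff α p‖ ^ 2 * wt d t α)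
      = ‖coeff α p‖ ^ 2 * wt d t α * normRatio d t m := by ring
    _ ≤ ‖coeff α p‖ ^ 2 * wt d t α *
          (Real.exp ((d + t) * univ.sup n) * normRatio d t (∑ i, α i)) := by gcongr
    _ = _ := by ring

theorem tNormSq_weightedHomogeneousComponent (m : ℕ) (p : MvPolynomial (Fin d) ℂ) :
    tNormSq d t (weightedHomogeneousComponent n m p) =
      ∑ α ∈ p.support with Finsupp.weight n α = m, ‖coeff α p‖ ^ 2 * wt d t α := by
  classical
  rw [tNormSq, support_weightedHomogeneousComponent]
  refine sum_congr rfl fun α hα => ?_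
  rw [coeff_weightedHomogeneousComponent, if_pos (mem_filter.mp hα).2]

theorem tNormSq_weightedHomogeneousComponent_le (ht : -(d : ℝ) ≤ t) (m : ℕ)
    (p : MvPolynomial (Fin d) ℂ) :
    tNormSq d t (weightedHomogeneousComponent n m p) ≤ tNormSq d t p := by
  rw [tNormSq_weightedHomogeneousComponent]
  exact sum_le_sum_of_subset_of_nonneg (filter_subset _ _)
    fun α _ _ => mul_nonneg (by positivity) (wt_pos ht α).le

theorem tNormSq_eq_sum_weightedHomogeneousComponent {p : MvPolynomial (Fin d) ℂ} {S : Finset ℕ}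
    (hS : ∀ α ∈ p.support, Finsupp.weight n α ∈ S) :
    tNormSq d t p = ∑ m ∈ S, tNormSq d t (weightedHomogeneousComponent n m p) := by
  classical
  simp only [tNormSq_weightedHomogeneousComponent]
  exact (sum_fiberwise_of_maps_to hS _).symm

theorem tNormSq_sum_of_isWeightedHomogeneous {S : Finset ℕ} {q : ℕ → MvPolynomial (Fin d) ℂ}
    (hq : ∀ m ∈ S, (q m).IsWeightedHomogeneous n m) :
    tNormSq d t (∑ m ∈ S, q m) = ∑ m ∈ S, tNormSq d t (q m) := by
  classical
  have hS : ∀ α ∈ (∑ m ∈ S, q m).support, Finsupp.weight n α ∈ S := by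
    intro α hα
    obtain ⟨m, hm, hαm⟩ := mem_biUnion.mp (support_sum hα)
    rwa [hq m hm (mem_support_iff.mp hαm)]
  rw [tNormSq_eq_sum_weightedHomogeneousComponent hS]
  refine sum_congr rfl fun m hm => congrArg _ ?_
  rw [map_sum, sum_eq_single_of_mem m hm
    fun m' hm' hne => (hq m' hm').weightedHomogeneousComponent_ne m hne.symm]
  exact (hq m hm).weightedHomogeneousComponent_same

def tNormVecSq (d r : ℕ) (t : ℝ) (h : Fin r → MvPolynomial (Fin d) ℂ) : ℝ :=
  ∑ j, tNormSq d t (h j)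

theorem tNormVec_eq_sqrt (h : Fin r → MvPolynomial (Fin d) ℂ) :
    tNormVec d r t h = √(tNormVecSq d r t h) := rfl

theorem tNormVec_sq (ht : -(d : ℝ) ≤ t) (h : Fin r → MvPolynomial (Fin d) ℂ) :
    tNormVec d r t h ^ 2 = tNormVecSq d r t h :=
  Real.sq_sqrt (sum_nonneg fun j _ => tNormSq_nonneg ht (h j))

theorem tNormVecSq_nonneg (ht : -(d : ℝ) ≤ t) (h : Fin r → MvPolynomial (Fin d) ℂ) :
    0 ≤ tNormVecSq d r t h :=
  sum_nonneg fun j _ => tNormSq_nonneg ht (h j)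

theorem tNormVecSq_neg_le_normRatio_mul (ht : -(d : ℝ) ≤ t) (hn : ∀ i, 0 < n i) {m : ℕ}
    {h : Fin r → MvPolynomial (Fin d) ℂ} (hh : QuasiHomogVec d r n m h) :
    tNormVecSq d r (-d) h ≤ normRatio d t m * tNormVecSq d r t h := by
  rw [tNormVecSq, tNormVecSq, mul_sum]
  exact sum_le_sum fun j _ => tNormSq_neg_le_normRatio_mul ht hn (hh j)

theorem normRatio_mul_tNormVecSq_le (ht : -(d : ℝ) ≤ t) (hn : ∀ i, 0 < n i) {m : ℕ}
    {h : Fin r → MvPolynomial (Fin d) ℂ} (hh : QuasiHomogVec d r n m h) :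
    normRatio d t m * tNormVecSq d r t h ≤
      Real.exp ((d + t) * univ.sup n) * tNormVecSq d r (-d) h := by
  rw [tNormVecSq, tNormVecSq, mul_sum, mul_sum]
  exact sum_le_sum fun j _ => normRatio_mul_tNormSq_le ht hn (hh j)

theorem tNormVecSq_piWeightedHomogeneousComponent_le (ht : -(d : ℝ) ≤ t) (m : ℕ)
    (h : Fin r → MvPolynomial (Fin d) ℂ) :
    tNormVecSq d r t (piWeightedHomogeneousComponent n m h) ≤ tNormVecSq d r t h :=
  sum_le_sum fun j _ => tNormSq_weightedHomogeneousComponent_le ht m (h j)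

theorem tNormVecSq_eq_sum_piWeightedHomogeneousComponent {h : Fin r → MvPolynomial (Fin d) ℂ}
    {S : Finset ℕ} (hS : ∀ j, ∀ α ∈ (h j).support, Finsupp.weight n α ∈ S) :
    tNormVecSq d r t h = ∑ m ∈ S, tNormVecSq d r t (piWeightedHomogeneousComponent n m h) := by
  unfold tNormVecSq
  rw [sum_comm]
  exact sum_congr rfl fun j _ => tNormSq_eq_sum_weightedHomogeneousComponent (hS j)

theorem tNormVecSq_sum_of_quasiHomogVec {S : Finset ℕ} {q : ℕ → Fin r → MvPolynomial (Fin d) ℂ}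
    (hq : ∀ m ∈ S, QuasiHomogVec d r n m (q m)) :
    tNormVecSq d r t (∑ m ∈ S, q m) = ∑ m ∈ S, tNormVecSq d r t (q m) := by
  unfold tNormVecSq
  rw [sum_comm]
  refine sum_congr rfl fun j _ => ?_
  rw [Finset.sum_apply]
  exact tNormSq_sum_of_isWeightedHomogeneous fun m hm => quasiHomogVec_iff.mp (hq m hm) j

end Norms

section Stability

variable {d r k : ℕ} {n : Fin d → ℕ}

def HasStableDivision (d r : ℕ) (t : ℝ)
    (M : Submodule (MvPolynomial (Fin d) ℂ) (Fin r → MvPolynomial (Fin d) ℂ))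
    (f : Fin k → Fin r → MvPolynomial (Fin d) ℂ) : Prop :=
  ∃ A : ℝ, ∀ h ∈ M, ∃ g : Fin k → MvPolynomial (Fin d) ℂ,
    h = ∑ i, g i • f i ∧ ∑ i, tNormVec d r t (g i • f i) ≤ A * tNormVec d r t h

theorem sum_tNormVec_le_sqrt_card_mul {t : ℝ} (ht : -(d : ℝ) ≤ t)
    (x : Fin k → Fin r → MvPolynomial (Fin d) ℂ) :
    ∑ i, tNormVec d r t (x i) ≤ √k * √(∑ i, tNormVecSq d r t (x i)) := by
  simpa [tNormVec_eq_sqrt] using Real.sum_sqrt_mul_sqrt_le univ (f := fun _ => 1)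
    (fun _ => zero_le_one) fun i => tNormVecSq_nonneg ht (x i)

theorem quasiHomogVec_piWeightedHomogeneousComponent (m : ℕ)
    (h : Fin r → MvPolynomial (Fin d) ℂ) :
    QuasiHomogVec d r n m (piWeightedHomogeneousComponent n m h) :=
  quasiHomogVec_iff.mpr (isWeightedHomogeneous_piWeightedHomogeneousComponent n m h)

theorem exists_quasiHomogVec_division {t : ℝ} (ht : -(d : ℝ) ≤ t)
    {G : Set (Fin r → MvPolynomial (Fin d) ℂ)} (hG : ∀ g ∈ G, ∃ m, QuasiHomogVec d r n m g)
    {f : Fin k → Fin r → MvPolynomial (Fin d) ℂ} (hf : ∀ i, ∃ m, QuasiHomogVec d r n m (f i))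
    {A : ℝ} (hA : ∀ h ∈ Submodule.span (MvPolynomial (Fin d) ℂ) G,
      ∃ g : Fin k → MvPolynomial (Fin d) ℂ,
        h = ∑ i, g i • f i ∧ ∑ i, tNormVec d r t (g i • f i) ≤ A * tNormVec d r t h)
    {h : Fin r → MvPolynomial (Fin d) ℂ} (hh : h ∈ Submodule.span (MvPolynomial (Fin d) ℂ) G)
    (m : ℕ) :
    ∃ g : Fin k → MvPolynomial (Fin d) ℂ,
      piWeightedHomogeneousComponent n m h = ∑ i, g i • f i ∧
      (∀ i, QuasiHomogVec d r n m (g i • f i)) ∧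
      ∑ i, tNormVecSq d r t (g i • f i) ≤
        A ^ 2 * tNormVecSq d r t (piWeightedHomogeneousComponent n m h) := by
  set hm := piWeightedHomogeneousComponent n m h
  obtain ⟨g, hdiv, hnorm⟩ := hA hm <| piWeightedHomogeneousComponent_mem_span
    (fun x hx => (hG x hx).imp fun _ => quasiHomogVec_iff.mp) hh m
  have hproj : ∀ i, ∃ g', g' • f i = piWeightedHomogeneousComponent n m (g i • f i) := fun i => by
    obtain ⟨mi, hmi⟩ := hf i
    exact ⟨_, (piWeightedHomogeneousComponent_smul (quasiHomogVec_iff.mp hmi) _ _).symm⟩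
  choose g' hg' using hproj
  refine ⟨g', ?_, fun i => hg' i ▸ quasiHomogVec_piWeightedHomogeneousComponent m _, ?_⟩
  · calc hm = piWeightedHomogeneousComponent n m hm :=
          (piWeightedHomogeneousComponent_of_isWeightedHomogeneous
            (isWeightedHomogeneous_piWeightedHomogeneousComponent n m h)).symm
      _ = ∑ i, g' i • f i := by rw [hdiv, map_sum]; simp only [hg']
  · calc ∑ i, tNormVecSq d r t (g' i • f i)
        ≤ ∑ i, tNormVecSq d r t (g i • f i) := sum_le_sum fun i _ =>
          hg' i ▸ tNormVecSq_piWeightedHomogeneousComponent_le ht m _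
      _ = ∑ i, tNormVec d r t (g i • f i) ^ 2 := by simp only [tNormVec_sq ht]
      _ ≤ (∑ i, tNormVec d r t (g i • f i)) ^ 2 :=
          sum_sq_le_sq_sum_of_nonneg fun i _ => Real.sqrt_nonneg _
      _ ≤ (A * tNormVec d r t hm) ^ 2 :=
          pow_le_pow_left₀ (sum_nonneg fun i _ => Real.sqrt_nonneg _) hnorm 2
      _ = A ^ 2 * tNormVecSq d r t hm := by rw [mul_pow, tNormVec_sq ht]

theorem HasStableDivision.of_comparable {t₁ t₂ : ℝ} (ht₁ : -(d : ℝ) ≤ t₁) (ht₂ : -(d : ℝ) ≤ t₂)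
    {G : Set (Fin r → MvPolynomial (Fin d) ℂ)} (hG : ∀ g ∈ G, ∃ m, QuasiHomogVec d r n m g)
    {f : Fin k → Fin r → MvPolynomial (Fin d) ℂ} (hf : ∀ i, ∃ m, QuasiHomogVec d r n m (f i))
    {a : ℕ → ℝ} {C : ℝ} (ha : ∀ m, 0 ≤ a m)
    (hle : ∀ m x, QuasiHomogVec d r n m x → tNormVecSq d r t₂ x ≤ a m * tNormVecSq d r t₁ x)
    (hge : ∀ m x, QuasiHomogVec d r n m x → a m * tNormVecSq d r t₁ x ≤ C * tNormVecSq d r t₂ x)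
    (hst : HasStableDivision d r t₁ (Submodule.span (MvPolynomial (Fin d) ℂ) G) f) :
    HasStableDivision d r t₂ (Submodule.span (MvPolynomial (Fin d) ℂ) G) f := by
  obtain ⟨A, hA⟩ := hst
  refine ⟨√(k * (A ^ 2 * C)), fun h hh => ?_⟩
  choose g hgh hgq hgA using exists_quasiHomogVec_division ht₁ hG hf hA hh
  obtain ⟨S, hS⟩ : ∃ S : Finset ℕ, ∀ j, ∀ α ∈ (h j).support, Finsupp.weight n α ∈ S :=
    ⟨univ.biUnion fun j => (h j).support.image (Finsupp.weight n),
      fun j α hα => mem_biUnion.mpr ⟨j, mem_univ j, mem_image_of_mem _ hα⟩⟩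
  set hm := fun m => piWeightedHomogeneousComponent n m h
  refine ⟨fun i => ∑ m ∈ S, g m i, ?_, ?_⟩
  · calc h = ∑ m ∈ S, hm m := (sum_piWeightedHomogeneousComponent_of_subset hS).symm
      _ = ∑ m ∈ S, ∑ i, g m i • f i := sum_congr rfl fun m _ => hgh m
      _ = ∑ i, (∑ m ∈ S, g m i) • f i := by simp only [sum_smul]; exact sum_comm
  have hsq : ∑ i, tNormVecSq d r t₂ ((∑ m ∈ S, g m i) • f i) ≤
      A ^ 2 * C * tNormVecSq d r t₂ h := calc
    _ = ∑ m ∈ S, ∑ i, tNormVecSq d r t₂ (g m i • f i) := by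
        simp only [sum_smul]
        rw [sum_comm]
        exact sum_congr rfl fun i _ => tNormVecSq_sum_of_quasiHomogVec fun m _ => hgq m i
    _ ≤ ∑ m ∈ S, a m * ∑ i, tNormVecSq d r t₁ (g m i • f i) := by
        gcongr with m
        rw [mul_sum]
        exact sum_le_sum fun i _ => hle m _ (hgq m i)
    _ ≤ ∑ m ∈ S, a m * (A ^ 2 * tNormVecSq d r t₁ (hm m)) := by
        gcongr with m
        · exact ha m
        · exact hgA m
    _ ≤ ∑ m ∈ S, A ^ 2 * (C * tNormVecSq d r t₂ (hm m)) := by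
        refine sum_le_sum fun m _ => ?_
        rw [mul_left_comm]
        exact mul_le_mul_of_nonneg_left
          (hge m _ (quasiHomogVec_piWeightedHomogeneousComponent m h)) (sq_nonneg A)
    _ = A ^ 2 * C * tNormVecSq d r t₂ h := by
        rw [tNormVecSq_eq_sum_piWeightedHomogeneousComponent hS, mul_sum]
        simp only [hm, mul_assoc]
  calc ∑ i, tNormVec d r t₂ ((∑ m ∈ S, g m i) • f i)
      ≤ √k * √(∑ i, tNormVecSq d r t₂ ((∑ m ∈ S, g m i) • f i)) :=
        sum_tNormVec_le_sqrt_card_mul ht₂ _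
    _ ≤ √k * √(A ^ 2 * C * tNormVecSq d r t₂ h) := by gcongr
    _ = √(k * (A ^ 2 * C)) * tNormVec d r t₂ h := by
        rw [Real.sqrt_mul' _ (tNormVecSq_nonneg ht₂ h), ← mul_assoc,
          ← Real.sqrt_mul (Nat.cast_nonneg k)]
        rfl

end Stability

theorem stmt_7_general
    (d r : ℕ) (t : ℝ) (ht : -(d : ℝ) < t)
    (n : Fin d → ℕ) (hn : ∀ i, 0 < n i)
    (M : Submodule (MvPolynomial (Fin d) ℂ) (Fin r → MvPolynomial (Fin d) ℂ))
    -- `M` is `n`-quasi homogeneous: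
    (hM : ∃ G : Set (Fin r → MvPolynomial (Fin d) ℂ),
      (∀ g ∈ G, ∃ m, QuasiHomogVec d r n m g) ∧
      M = Submodule.span (MvPolynomial (Fin d) ℂ) G)
    -- `f₁, …, f_k` is a generating set for `M` consisting of `n`-quasi homogeneous
    -- elements:
    (k : ℕ) (f : Fin k → (Fin r → MvPolynomial (Fin d) ℂ))
    (hfq : ∀ i, ∃ m, QuasiHomogVec d r n m (f i)) :
    -- stable generation w.r.t. the Drury–Arveson norm `‖·‖_{H²_d} = ‖·‖_{-d}` iff
    -- stable generation w.r.t. `‖·‖_t`: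
    (∃ A : ℝ, ∀ h ∈ M, ∃ g : Fin k → MvPolynomial (Fin d) ℂ,
        h = ∑ i, g i • f i ∧
        ∑ i, tNormVec d r (-(d : ℝ)) (g i • f i) ≤ A * tNormVec d r (-(d : ℝ)) h) ↔
      (∃ A : ℝ, ∀ h ∈ M, ∃ g : Fin k → MvPolynomial (Fin d) ℂ,
        h = ∑ i, g i • f i ∧
        ∑ i, tNormVec d r t (g i • f i) ≤ A * tNormVec d r t h) := by
  obtain ⟨G, hG, rfl⟩ := hM
  replace ht := ht.le
  set e := Real.exp ((d + t) * univ.sup n)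
  have hR := normRatio_pos ht
  have hlow {m x} (hx : QuasiHomogVec d r n m x) := tNormVecSq_neg_le_normRatio_mul ht hn hx
  have hup {m x} (hx : QuasiHomogVec d r n m x) := normRatio_mul_tNormVecSq_le ht hn hx
  constructor
  · refine HasStableDivision.of_comparable le_rfl ht hG hfq (a := fun m => e / normRatio d t m)
      (C := e) (fun m => (div_pos (Real.exp_pos _) (hR m)).le) (fun m x hx => ?_) (fun m x hx => ?_)
    · rw [div_mul_eq_mul_div, le_div_iff₀ (hR m), mul_comm]
      exact hup hx
    · rw [div_mul_eq_mul_div, div_le_iff₀ (hR m), mul_assoc, mul_comm (tNormVecSq _ _ _ _)]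
      exact mul_le_mul_of_nonneg_left (hlow hx) (Real.exp_pos _).le
  · exact HasStableDivision.of_comparable ht le_rfl hG hfq (fun m => (hR m).le)
      (fun _ _ => hlow) (fun _ _ => hup)

/-- Let `t > -d` and let `M ⊆ ℂ[z₁,…,z_d]^r` be an `n`-quasi
homogeneous submodule.  A generating set `f₁,…,f_k` for `M` consisting of `n`-quasi
homogeneous elements is a stable generating set with respect to the Drury–Arveson
norm `‖·‖_{H²_d}` (that is, `‖·‖_t` with `t = -d`) if and only if it is a stable
generating set with respect to `‖·‖_t`. -/
theorem stmt_7
    (d r : ℕ) (hd : 1 ≤ d) (hr : 1 ≤ r) (t : ℝ) (ht : -(d : ℝ) < t)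
    (n : Fin d → ℕ) (hn : ∀ i, 0 < n i)
    (M : Submodule (MvPolynomial (Fin d) ℂ) (Fin r → MvPolynomial (Fin d) ℂ))
    -- `M` is `n`-quasi homogeneous:
    (hM : ∃ G : Set (Fin r → MvPolynomial (Fin d) ℂ),
      (∀ g ∈ G, ∃ m, QuasiHomogVec d r n m g) ∧
      M = Submodule.span (MvPolynomial (Fin d) ℂ) G)
    -- `f₁, …, f_k` is a generating set for `M` consisting of `n`-quasi homogeneous
    -- elements:
    (k : ℕ) (f : Fin k → (Fin r → MvPolynomial (Fin d) ℂ))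
    (hgen : M = Submodule.span (MvPolynomial (Fin d) ℂ) (Set.range f))
    (hfq : ∀ i, ∃ m, QuasiHomogVec d r n m (f i)) :
    -- stable generation w.r.t. the Drury–Arveson norm `‖·‖_{H²_d} = ‖·‖_{-d}` iff
    -- stable generation w.r.t. `‖·‖_t`:
    (∃ A : ℝ, ∀ h ∈ M, ∃ g : Fin k → MvPolynomial (Fin d) ℂ,
        h = ∑ i, g i • f i ∧
        ∑ i, tNormVec d r (-(d : ℝ)) (g i • f i) ≤ A * tNormVec d r (-(d : ℝ)) h) ↔
      (∃ A : ℝ, ∀ h ∈ M, ∃ g : Fin k → MvPolynomial (Fin d) ℂ,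
        h = ∑ i, g i • f i ∧
        ∑ i, tNormVec d r t (g i • f i) ≤ A * tNormVec d r t h) :=
  stmt_7_general d r t ht n hn M hM k f hfq
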